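/- arXiv:math/0303035 — 3 statements merged into one kernel-verified Lean document; each statement's English description precedes it below -/
import Mathlib

section
/- For positive integers c ≤ d, the real number e(c,d) := (d!/(c+d-1)!)·S(c+d-1,d) − (1/(c+d-1)!)·\sum_{0 < j < i ≤ c} \binom{c}{i}\binom{d}{j}(−1)^{c−i+j}(i−j)^{c+d−1}, when c = 2, equals d(1/2 + 1/(d+1)!). -/
/-- Stirling numbers of the second kind. -/
def stirling : ℕ → ℕ → ℕ
  | 0, 0 => 1
  | 0, _ + 1 => 0
  | _ + 1, 0 => 0
  | n + 1, k + 1 => (k + 1) * stirling n (k + 1) + stirling n k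

/-- The Hilbert–Kunz multiplicity formula for the Segre product of polynomial
rings in `c` and `d` variables. -/
noncomputable def eHKSegre (c d : ℕ) : ℝ :=
  ((Nat.factorial d : ℝ) / (Nat.factorial (c + d - 1))) * stirling (c + d - 1) d -
    (1 / (Nat.factorial (c + d - 1) : ℝ)) *
      ∑ i ∈ Finset.Icc 1 c, ∑ j ∈ Finset.Ico 1 i,
        (Nat.choose c i : ℝ) * (Nat.choose d j) * (-1 : ℝ) ^ (c - i + j) *
          ((i : ℝ) - (j : ℝ)) ^ (c + d - 1)

lemma stirling_eq_zero (n k : ℕ) (h : n < k) : stirling n k = 0 := by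
  induction n generalizing k with
  | zero => cases k with
    | zero => omega
    | succ k => rfl
  | succ n ih =>
    cases k with
    | zero => omega
    | succ k =>
      show (k + 1) * stirling n (k + 1) + stirling n k = 0
      rw [ih _ (by omega), ih _ (by omega)]
      ring

lemma stirling_self (n : ℕ) : stirling n n = 1 := by
  induction n with
  | zero => rfl
  | succ n ih =>
    show (n + 1) * stirling n (n + 1) + stirling n n = 1
    rw [stirling_eq_zero n (n+1) (by omega), ih]
    ring

lemma stirling_succ_self (n : ℕ) : 2 * stirling (n + 1) n = n * (n + 1) := by
  induction n with
  | zero => rfl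
  | succ n ih =>
    have : stirling (n + 2) (n + 1) = (n + 1) * stirling (n + 1) (n + 1) + stirling (n + 1) n :=
      rfl
    rw [this, stirling_self]
    ring_nf
    ring_nf at ih
    omega

theorem eHKSegre_two (d : ℕ) (hd : 2 ≤ d) :
    eHKSegre 2 d = (d : ℝ) * (1 / 2 + 1 / (Nat.factorial (d + 1))) := by
  have h1 : 2 + d - 1 = d + 1 := by omega
  have hS : (stirling (d + 1) d : ℝ) = d * (d + 1) / 2 := by
    have := stirling_succ_self d
    have : (2 : ℝ) * stirling (d + 1) d = d * (d + 1) := by exact_mod_cast this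
    linarith
  have hfac : (Nat.factorial (d + 1) : ℝ) = (d + 1) * Nat.factorial d := by
    exact_mod_cast Nat.factorial_succ d
  have hfd : (Nat.factorial d : ℝ) ≠ 0 := Nat.cast_ne_zero.mpr (Nat.factorial_ne_zero d)
  have hd1 : ((d : ℝ) + 1) ≠ 0 := by positivity
  unfold eHKSegre
  rw [h1]
  rw [show Finset.Icc 1 2 = {1, 2} by rfl]
  rw [Finset.sum_insert (by decide), Finset.sum_singleton]
  rw [show Finset.Ico 1 1 = (∅ : Finset ℕ) by rfl, Finset.sum_empty]
  rw [show Finset.Ico 1 2 = {1} by rfl, Finset.sum_singleton]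
  rw [hS, hfac]
  have hc1 : (Nat.choose d 1 : ℝ) = d := by norm_num
  rw [hc1]
  have h2 : (2 : ℕ) - 2 + 1 = 1 := rfl
  norm_num [h2]
  field_simp
end

section
/- Let c,d be positive integers. Then lim_{q→∞} (1/q^{c+d-1}) \sum_{n=0}^{c(q-1)} α_{c,n,q} · (n^{d-1}/(d-1)!) = (c!/(c+d-1)!)·S(c+d-1,c), where α_{c,n,q} := \sum_{i=0}^{c} (-1)^i \binom{c}{i} α_{c,n-iq} with α_{c,m} := \binom{m+c-1}{c-1} for m ≥ 0 and 0 for m < 0. -/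
/-- `α c m = C(m+c-1, c-1)` for `m ≥ 0`, and `0` for `m < 0`. -/
def alphaZ (c : ℕ) (m : ℤ) : ℕ :=
  if m < 0 then 0 else Nat.choose (m.toNat + c - 1) (c - 1)

/-- `α_{c,n,q} = ∑_{i=0}^{c} (-1)^i C(c,i) α_{c, n - i q}`. -/
def alphaq (c n q : ℕ) : ℤ :=
  ∑ i ∈ Finset.range (c + 1), (-1 : ℤ) ^ i * (Nat.choose c i) * alphaZ c ((n : ℤ) - i * q)

open Finset Finset.Nat PowerSeries Filter

open Finset Finset.Nat

lemma stirling_zero_right : ∀ n, stirling n 0 = if n = 0 then 1 else 0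
  | 0 => rfl
  | _ + 1 => rfl

lemma stirling_succ_one : ∀ n, stirling (n + 1) 1 = 1
  | 0 => rfl
  | n + 1 => by
    show 1 * stirling (n + 1) 1 + stirling (n + 1) 0 = 1
    rw [stirling_succ_one n, stirling_zero_right]; simp

lemma stirling_eq_zero_of_lt : ∀ n k, n < k → stirling n k = 0
  | 0, _ + 1, _ => rfl
  | n + 1, k + 1, h => by
    show (k + 1) * stirling n (k + 1) + stirling n k = 0
    rw [stirling_eq_zero_of_lt n (k+1) (by omega), stirling_eq_zero_of_lt n k (by omega)]
    simp

noncomputable def hR (c N : ℕ) : ℝ := (Nat.factorial c : ℝ) * stirling N c / Nat.factorial N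
noncomputable def aR (q : ℕ) : ℝ := if q = 0 then 0 else 1 / Nat.factorial q

lemma hR_rec (c N : ℕ) :
    hR (c + 1) (N + 1) = ((c : ℝ) + 1) * (hR (c + 1) N + hR c N) / (N + 1) := by
  have hs : stirling (N+1) (c+1) = (c+1) * stirling N (c+1) + stirling N c := rfl
  unfold hR
  rw [hs, Nat.factorial_succ (n := N), Nat.factorial_succ (n := c)]
  push_cast
  have h1 : (N.factorial : ℝ) ≠ 0 := Nat.cast_ne_zero.2 N.factorial_ne_zero
  have h2 : (c.factorial : ℝ) ≠ 0 := Nat.cast_ne_zero.2 c.factorial_ne_zero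
  have h3 : (N : ℝ) + 1 ≠ 0 := by positivity
  field_simp

lemma hR_rec' (c N : ℕ) :
    ((N : ℝ) + 1) * hR (c + 1) (N + 1) = ((c : ℝ) + 1) * (hR (c + 1) N + hR c N) := by
  rw [hR_rec]
  field_simp

lemma hR_zero_left (N : ℕ) : hR 0 N = if N = 0 then 1 else 0 := by
  unfold hR
  rw [stirling_zero_right]
  split <;> simp_all [Nat.factorial_ne_zero]

lemma hR_zero_right (c : ℕ) : hR (c + 1) 0 = 0 := by
  unfold hR
  rw [stirling_eq_zero_of_lt 0 (c+1) (by omega)]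
  simp

lemma sum_delta_snd (c N : ℕ) :
    ∑ p ∈ antidiagonal N, hR c p.1 * (if p.2 = 0 then (1:ℝ) else 0) = hR c N := by
  rw [Finset.sum_eq_single_of_mem (N, 0) (by simp)]
  · simp
  · rintro ⟨a, b⟩ hab hne
    rw [HasAntidiagonal.mem_antidiagonal] at hab
    have : b ≠ 0 := by rintro rfl; exact hne (by simp [← hab])
    simp [this]

lemma hR_conv : ∀ c N, hR (c + 1) N = ∑ p ∈ antidiagonal N, hR c p.1 * aR p.2 := by
  intro c
  induction c with
  | zero =>
    intro N
    rw [Finset.sum_eq_single_of_mem (0, N) (by simp)]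
    · rw [hR_zero_left]
      simp only [if_pos rfl, one_mul]
      cases N with
      | zero => simp [hR_zero_right, aR]
      | succ N =>
        unfold hR aR
        rw [stirling_succ_one]
        simp [Nat.factorial]
    · rintro ⟨a, b⟩ hab hne
      rw [HasAntidiagonal.mem_antidiagonal] at hab
      have : a ≠ 0 := by
        rintro rfl
        have hb : b = N := by simpa using hab
        exact hne (by rw [hb])
      rw [hR_zero_left, if_neg this, zero_mul]
  | succ c IH =>
    intro N
    induction N with
    | zero => simp [hR_zero_right, aR]
    | succ N IHN =>
      have hN1 : ((N : ℝ) + 1) ≠ 0 := by positivity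
      have key : ((N : ℝ) + 1) * ∑ p ∈ antidiagonal (N+1), hR (c+1) p.1 * aR p.2
          = ((c : ℝ) + 2) * ((∑ p ∈ antidiagonal N, hR (c+1) p.1 * aR p.2) + hR (c+1) N) := by
        rw [Finset.mul_sum]
        have step1 : ∀ p ∈ antidiagonal (N+1), ((N : ℝ)+1) * (hR (c+1) p.1 * aR p.2)
            = (p.1 : ℝ) * (hR (c+1) p.1 * aR p.2) + (p.2 : ℝ) * (hR (c+1) p.1 * aR p.2) := by
          rintro ⟨a, b⟩ hab
          rw [HasAntidiagonal.mem_antidiagonal] at hab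
          simp only at hab
          have h' : (a : ℝ) + b = (N : ℝ) + 1 := by exact_mod_cast hab
          rw [← h']; ring
        rw [Finset.sum_congr rfl step1, Finset.sum_add_distrib]
        have S1 : ∑ p ∈ antidiagonal (N+1), (p.1 : ℝ) * (hR (c+1) p.1 * aR p.2)
            = ((c : ℝ) + 1) * ((∑ p ∈ antidiagonal N, hR (c+1) p.1 * aR p.2) + hR (c+1) N) := by
          rw [sum_antidiagonal_succ (f := fun p => (p.1 : ℝ) * (hR (c+1) p.1 * aR p.2))]
          simp only [Nat.cast_zero, zero_mul, zero_add]
          have : ∀ p ∈ antidiagonal N, ((p.1 + 1 : ℕ) : ℝ) * (hR (c+1) (p.1+1) * aR p.2)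
              = ((c : ℝ) + 1) * ((hR (c+1) p.1 + hR c p.1) * aR p.2) := by
            rintro ⟨a, b⟩ _
            have h2 := hR_rec' c a
            push_cast
            rw [← mul_assoc, h2]
            ring
          rw [Finset.sum_congr rfl this, ← Finset.mul_sum]
          congr 1
          have : ∀ p ∈ antidiagonal N, (hR (c+1) p.1 + hR c p.1) * aR p.2
              = hR (c+1) p.1 * aR p.2 + hR c p.1 * aR p.2 := fun p _ => by ring
          rw [Finset.sum_congr rfl this, Finset.sum_add_distrib, ← IH N]
        have S2 : ∑ p ∈ antidiagonal (N+1), (p.2 : ℝ) * (hR (c+1) p.1 * aR p.2)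
            = (∑ p ∈ antidiagonal N, hR (c+1) p.1 * aR p.2) + hR (c+1) N := by
          rw [sum_antidiagonal_succ' (f := fun p => (p.2 : ℝ) * (hR (c+1) p.1 * aR p.2))]
          simp only [Nat.cast_zero, zero_mul, zero_add]
          have : ∀ p ∈ antidiagonal N, ((p.2 + 1 : ℕ) : ℝ) * (hR (c+1) p.1 * aR (p.2+1))
              = hR (c+1) p.1 * aR p.2 + hR (c+1) p.1 * (if p.2 = 0 then (1:ℝ) else 0) := by
            rintro ⟨a, b⟩ _
            have hfac : ((b:ℝ) + 1) * aR (b + 1) = aR b + (if b = 0 then (1:ℝ) else 0) := by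
              unfold aR
              rw [if_neg (Nat.succ_ne_zero b), Nat.factorial_succ]
              push_cast
              have : ((b:ℝ) + 1) ≠ 0 := by positivity
              have hb : (Nat.factorial b : ℝ) ≠ 0 := Nat.cast_ne_zero.2 b.factorial_ne_zero
              split
              · subst_vars; simp [Nat.factorial]
              · field_simp
                simp
            push_cast
            rw [mul_comm, mul_assoc, mul_comm (aR (b+1)), hfac]
            ring
          rw [Finset.sum_congr rfl this, Finset.sum_add_distrib, sum_delta_snd]
        rw [S1, S2]
        ring
      have target : hR (c+2) (N+1) = ((c : ℝ) + 2) * ((∑ p ∈ antidiagonal N, hR (c+1) p.1 * aR p.2) + hR (c+1) N) / (N+1) := by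
        rw [hR_rec (c+1) N, IHN]
        push_cast
        ring
      rw [target, ← key]
      field_simp

lemma conv_step (C e : ℕ) :
    ∑ p ∈ antidiagonal e, (1 / (Nat.factorial (p.1 + 1)) : ℝ) * hR C (C + p.2)
      = hR (C + 1) (C + 1 + e) := by
  have hrhs : hR (C + 1) (C + 1 + e) = ∑ m ∈ range (e + 1), hR C (C + m) * aR (e + 1 - m) := by
    rw [hR_conv, Finset.Nat.sum_antidiagonal_eq_sum_range_succ_mk]
    simp only [Nat.succ_eq_add_one]
    have hsplit : C + 1 + e + 1 = C + (e + 2) := by omega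
    rw [hsplit, Finset.sum_range_add]
    have h1 : ∑ i ∈ range C, hR C i * aR (C + 1 + e - i) = 0 := by
      apply Finset.sum_eq_zero
      intro i hi
      rw [mem_range] at hi
      unfold hR
      rw [stirling_eq_zero_of_lt i C hi]
      simp
    rw [h1, zero_add, Finset.sum_range_succ]
    have h2 : aR (C + 1 + e - (C + (e + 1))) = 0 := by
      have : C + 1 + e - (C + (e + 1)) = 0 := by omega
      rw [this]; rfl
    rw [h2, mul_zero, add_zero]
    apply Finset.sum_congr rfl
    intro m hm
    rw [mem_range] at hm
    have : C + 1 + e - (C + m) = e + 1 - m := by omega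
    rw [this]
  rw [hrhs, ← Finset.sum_range_reflect, Finset.Nat.sum_antidiagonal_eq_sum_range_succ_mk]
  simp only [Nat.succ_eq_add_one]
  apply Finset.sum_congr rfl
  intro j hj
  rw [mem_range] at hj
  have e1 : e + 1 - 1 - j = e - j := by omega
  have e2 : e + 1 - (e - j) = j + 1 := by omega
  rw [e1, e2]
  unfold aR
  rw [if_neg (Nat.succ_ne_zero j)]
  ring

lemma TR_eq {ι : Type*} [DecidableEq ι] (s : Finset ι) (e : ℕ) :
    ∑ k ∈ piAntidiag s e, ∏ i ∈ s, (1 : ℝ) / (Nat.factorial (k i + 1))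
      = hR s.card (s.card + e) := by
  induction s using Finset.cons_induction generalizing e with
  | empty =>
    rw [piAntidiag_empty]
    split
    · subst_vars; simp [hR, stirling]
    · rw [Finset.card_empty, hR_zero_left, if_neg (by omega)]
      simp
  | cons i s hi IH =>
    rw [piAntidiag_cons, Finset.sum_disjiUnion]
    have inner : ∀ p ∈ antidiagonal e,
        (∑ k ∈ (piAntidiag s p.2).map (addRightEmbedding fun t => if t = i then p.1 else 0),
          ∏ j ∈ cons i s hi, (1 : ℝ) / (Nat.factorial (k j + 1)))
        = (1 / (Nat.factorial (p.1 + 1)) : ℝ) * hR s.card (s.card + p.2) := by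
      rintro ⟨a, b⟩ _
      rw [Finset.sum_map, ← IH b, Finset.mul_sum]
      apply Finset.sum_congr rfl
      intro g hg
      rw [mem_piAntidiag] at hg
      have hgi : g i = 0 := by
        by_contra h
        exact hi (hg.2 i h)
      rw [Finset.prod_cons]
      simp only [addRightEmbedding_apply, Pi.add_apply]
      congr 1
      · rw [hgi]; simp
      · apply Finset.prod_congr rfl
        intro j hj
        have hne : j ≠ i := fun h => hi (h ▸ hj)
        rw [if_neg hne, add_zero]
    rw [Finset.sum_congr rfl inner, Finset.card_cons]
    have := conv_step s.card e
    rw [← this]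


lemma geom_diff (x : ℝ) (n : ℕ) :
    (x+1)^n - x^n = ∑ i ∈ range n, (x+1)^i * x^(n-1-i) := by
  have := geom_sum₂_mul (x+1) x n
  simp only [add_sub_cancel_left, mul_one] at this
  linarith

lemma diff_lower (x : ℝ) (hx : 0 ≤ x) (e : ℕ) :
    ((e:ℝ)+1) * x^e ≤ (x+1)^(e+1) - x^(e+1) := by
  rw [geom_diff]
  have key : ∀ i ∈ range (e+1), x^e ≤ (x+1)^i * x^(e+1-1-i) := by
    intro i hi
    rw [mem_range] at hi
    have h0 : e + 1 - 1 - i = e - i := by omega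
    have h2 : i + (e - i) = e := by omega
    rw [h0]
    have h1 : x^i * x^(e-i) ≤ (x+1)^i * x^(e-i) :=
      mul_le_mul_of_nonneg_right (pow_le_pow_left₀ hx (by linarith) i) (by positivity)
    calc x^e = x^i * x^(e-i) := by rw [← pow_add, h2]
    _ ≤ _ := h1
  calc ((e:ℝ)+1) * x^e = ∑ _i ∈ range (e+1), x^e := by
        rw [Finset.sum_const, card_range]; push_cast; ring
  _ ≤ _ := Finset.sum_le_sum key

lemma diff_upper (x : ℝ) (hx : 0 ≤ x) (e : ℕ) :
    (x+1)^(e+1) - x^(e+1) ≤ ((e:ℝ)+1) * (x+1)^e := by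
  rw [geom_diff]
  have key : ∀ i ∈ range (e+1), (x+1)^i * x^(e+1-1-i) ≤ (x+1)^e := by
    intro i hi
    rw [mem_range] at hi
    have h0 : e + 1 - 1 - i = e - i := by omega
    have h2 : i + (e - i) = e := by omega
    rw [h0]
    have h1 : (x+1)^i * x^(e-i) ≤ (x+1)^i * (x+1)^(e-i) :=
      mul_le_mul_of_nonneg_left (pow_le_pow_left₀ hx (by linarith) _) (by positivity)
    calc (x+1)^i * x^(e-i) ≤ (x+1)^i * (x+1)^(e-i) := h1
    _ = (x+1)^e := by rw [← pow_add, h2]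
  calc ∑ i ∈ range (e+1), (x+1)^i * x^(e+1-1-i) ≤ ∑ _i ∈ range (e+1), (x+1)^e :=
        Finset.sum_le_sum key
  _ = ((e:ℝ)+1) * (x+1)^e := by rw [Finset.sum_const, card_range]; push_cast; ring

lemma telescope (e q : ℕ) :
    (q:ℝ)^(e+1) = ∑ j ∈ range q, ((((j+1):ℕ):ℝ)^(e+1) - (j:ℝ)^(e+1)) := by
  rw [Finset.sum_range_sub (fun j => ((j:ℝ))^(e+1))]
  simp [zero_pow (Nat.succ_ne_zero e)]

lemma sum_bound_upper (e q : ℕ) :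
    ((e:ℝ)+1) * ∑ j ∈ range q, (j:ℝ)^e ≤ (q:ℝ)^(e+1) := by
  rw [telescope e q, Finset.mul_sum]
  apply Finset.sum_le_sum
  intro j _
  have := diff_lower (j:ℝ) (by positivity) e
  push_cast
  linarith

lemma sum_bound_lower (e q : ℕ) :
    (q:ℝ)^(e+1) ≤ ((e:ℝ)+1) * ((∑ j ∈ range q, (j:ℝ)^e) + (q:ℝ)^e) := by
  have step1 : (q:ℝ)^(e+1) ≤ ((e:ℝ)+1) * ∑ j ∈ range q, ((j:ℝ)+1)^e := by
    rw [telescope e q, Finset.mul_sum]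
    apply Finset.sum_le_sum
    intro j _
    have := diff_upper (j:ℝ) (by positivity) e
    push_cast
    linarith
  have step2 : ∑ j ∈ range q, ((j:ℝ)+1)^e ≤ (∑ j ∈ range q, (j:ℝ)^e) + (q:ℝ)^e := by
    have h1 : ∑ j ∈ range (q+1), (j:ℝ)^e = (∑ j ∈ range q, ((j:ℝ)+1)^e) + ((0:ℝ))^e := by
      rw [Finset.sum_range_succ' (fun j => ((j:ℝ))^e) q]
      push_cast
      simp [add_comm]
    have h2 : ∑ j ∈ range (q+1), (j:ℝ)^e = (∑ j ∈ range q, (j:ℝ)^e) + (q:ℝ)^e :=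
      Finset.sum_range_succ _ q
    have : (0:ℝ) ≤ (0:ℝ)^e := by positivity
    linarith
  calc (q:ℝ)^(e+1) ≤ ((e:ℝ)+1) * ∑ j ∈ range q, ((j:ℝ)+1)^e := step1
  _ ≤ _ := mul_le_mul_of_nonneg_left step2 (by positivity)

lemma tendsto_riemann (e : ℕ) :
    Tendsto (fun q : ℕ => (∑ j ∈ range q, (j:ℝ)^e) / (q:ℝ)^(e+1)) atTop
      (nhds (1/((e:ℝ)+1))) := by
  have he : (0:ℝ) < (e:ℝ)+1 := by positivity
  apply tendsto_of_tendsto_of_tendsto_of_le_of_le'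
    (g := fun q : ℕ => 1/((e:ℝ)+1) - 1/(q:ℝ)) (h := fun _ : ℕ => 1/((e:ℝ)+1))
  · have h0 : Tendsto (fun q : ℕ => 1/(q:ℝ)) atTop (nhds 0) := tendsto_one_div_atTop_nhds_zero_nat
    simpa using (tendsto_const_nhds (x := 1/((e:ℝ)+1))).sub h0
  · exact tendsto_const_nhds
  · filter_upwards [eventually_ge_atTop 1] with q hq
    have hq0 : (0:ℝ) < (q:ℝ) := by exact_mod_cast hq
    have hqp : (0:ℝ) < (q:ℝ)^(e+1) := by positivity
    rw [le_div_iff₀ hqp]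
    have hb := sum_bound_lower e q
    have heq : (1/((e:ℝ)+1) - 1/(q:ℝ)) * (q:ℝ)^(e+1)
        = (q:ℝ)^(e+1)/((e:ℝ)+1) - (q:ℝ)^e := by
      field_simp
      ring
    rw [heq, sub_le_iff_le_add, div_le_iff₀ he]
    nlinarith [hb]
  · filter_upwards with q
    have hq2 : (0:ℝ) ≤ (q:ℝ)^(e+1) := by positivity
    rcases eq_or_lt_of_le hq2 with h | h
    · rw [← h]; simp; positivity
    · rw [div_le_div_iff₀ h he]
      have := sum_bound_upper e q
      nlinarith


noncomputable abbrev G (q : ℕ) : ℤ⟦X⟧ := ∑ j ∈ range q, (X : ℤ⟦X⟧)^j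

lemma geom_pow (q c : ℕ) : ((1 : ℤ⟦X⟧) - X^q)^c = (1 - X)^c * (G q)^c := by
  rw [← mul_pow]
  congr 1
  have h1 := geom_sum_mul (X : ℤ⟦X⟧) q
  have h2 : (1 - (X:ℤ⟦X⟧)) * G q = -((G q) * ((X:ℤ⟦X⟧) - 1)) := by ring
  rw [h2, h1]
  ring

lemma coeff_G_pow (c q n : ℕ) (hc : 1 ≤ c) :
    (PowerSeries.coeff (R := ℤ) n) ((G q)^c) = alphaq c n q := by
  have key : (G q)^c = ((1 : ℤ⟦X⟧) - X^q)^c * (invOneSubPow ℤ c).val := by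
    rw [geom_pow, mul_comm ((1-(X:ℤ⟦X⟧))^c), mul_assoc, ← invOneSubPow_inv_eq_one_sub_pow,
      Units.inv_eq_val_inv, Units.inv_mul, mul_one]
  have expand : ((1 : ℤ⟦X⟧) - X^q)^c
      = ∑ i ∈ range (c+1), ((-1:ℤ⟦X⟧)^i * (Nat.choose c i : ℤ⟦X⟧)) * (X^(q*i)) := by
    have : ((1 : ℤ⟦X⟧) - X^q) = (-(X^q)) + 1 := by ring
    rw [this, add_pow]
    apply Finset.sum_congr rfl
    intro i _
    rw [one_pow, neg_pow, pow_mul, mul_one]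
    ring
  rw [key, expand, Finset.sum_mul, map_sum, alphaq]
  apply Finset.sum_congr rfl
  intro i hi
  rw [mem_range] at hi
  have hconst : ((-1:ℤ⟦X⟧)^i * ((Nat.choose c i : ℕ) : ℤ⟦X⟧))
      = PowerSeries.C (R := ℤ) ((-1)^i * (Nat.choose c i : ℤ)) := by
    rw [map_mul, map_pow, map_neg, map_one, map_natCast]
  rw [hconst, mul_assoc] at *
  rw [PowerSeries.coeff_C_mul, mul_comm ((X:ℤ⟦X⟧)^(q*i)), PowerSeries.coeff_mul_X_pow',
    invOneSubPow_val_eq_mk_sub_one_add_choose_of_pos (S := ℤ) (d := c) hc]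
  simp only [PowerSeries.coeff_mk]
  have hif : ((alphaZ c ((n:ℤ) - i*q)) : ℤ)
      = if q*i ≤ n then ((Nat.choose (c-1 + (n - q*i)) (c-1) : ℕ) : ℤ) else 0 := by
    rw [show ((n:ℤ) - i*q) = ((n:ℤ) - ((q*i : ℕ) : ℤ)) from by push_cast; ring]
    unfold alphaZ
    split_ifs with h1 h2 h2
    · omega
    · rfl
    · have ht : ((n:ℤ) - ((q*i:ℕ):ℤ)).toNat = n - q*i := by omega
      have ha : (n - q*i) + c - 1 = c - 1 + (n - q*i) := by omega
      rw [ht, ha]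
    · exfalso; omega
  rw [hif]

lemma G_pow_eq (q c : ℕ) :
    (G q)^c = ∑ p ∈ Fintype.piFinset (fun _ : Fin c => range q), (X:ℤ⟦X⟧)^(∑ i, p i) := by
  have h1 : (G q)^c = ∏ _i : Fin c, G q := by
    rw [Finset.prod_const, card_univ, Fintype.card_fin]
  rw [h1, Finset.prod_univ_sum]
  apply Finset.sum_congr rfl
  intro p _
  rw [Finset.prod_pow_eq_pow_sum]

lemma bridge (c q : ℕ) (hc : 1 ≤ c) (g : ℕ → ℝ) :
    ∑ n ∈ range (c*(q-1)+1), ((alphaq c n q : ℤ) : ℝ) * g n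
      = ∑ p ∈ Fintype.piFinset (fun _ : Fin c => range q), g (∑ i, p i) := by
  have hcoeff : ∀ n, ((alphaq c n q : ℤ) : ℝ)
      = ∑ p ∈ Fintype.piFinset (fun _ : Fin c => range q),
          (if n = ∑ i, p i then (1:ℝ) else 0) := by
    intro n
    rw [← coeff_G_pow c q n hc, G_pow_eq, map_sum]
    push_cast
    apply Finset.sum_congr rfl
    intro p _
    rw [PowerSeries.coeff_X_pow]
    split_ifs <;> simp
  calc ∑ n ∈ range (c*(q-1)+1), ((alphaq c n q : ℤ) : ℝ) * g n
      = ∑ n ∈ range (c*(q-1)+1), ∑ p ∈ Fintype.piFinset (fun _ : Fin c => range q),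
          (if n = ∑ i, p i then g n else 0) := by
        apply Finset.sum_congr rfl
        intro n _
        rw [hcoeff n, Finset.sum_mul]
        apply Finset.sum_congr rfl
        intro p _
        split_ifs <;> simp
  _ = ∑ p ∈ Fintype.piFinset (fun _ : Fin c => range q),
        ∑ n ∈ range (c*(q-1)+1), (if n = ∑ i, p i then g n else 0) := Finset.sum_comm
  _ = _ := by
      apply Finset.sum_congr rfl
      intro p hp
      rw [Finset.sum_ite_eq' (range (c*(q-1)+1)) (∑ i, p i) g]
      rw [if_pos]
      rw [mem_range]
      have hmem : ∀ i, p i ≤ q - 1 := by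
        intro i
        rw [Fintype.mem_piFinset] at hp
        have := hp i
        rw [mem_range] at this
        omega
      have : ∑ i, p i ≤ c * (q-1) := by
        calc ∑ i, p i ≤ ∑ _i : Fin c, (q-1) := Finset.sum_le_sum (fun i _ => hmem i)
        _ = c * (q-1) := by rw [Finset.sum_const, card_univ, Fintype.card_fin, smul_eq_mul]
      omega

lemma per_k_value (c e : ℕ) (k : Fin c → ℕ) (hk : k ∈ piAntidiag (univ : Finset (Fin c)) e) :
    ((Nat.multinomial univ k : ℝ) / (Nat.factorial e)) * ∏ i, (1:ℝ)/((k i : ℝ)+1)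
      = ∏ i, (1:ℝ) / (Nat.factorial (k i + 1)) := by
  rw [mem_piAntidiag] at hk
  have hsum : ∑ i, k i = e := hk.1
  have spec := Nat.multinomial_spec (univ : Finset (Fin c)) k
  rw [hsum] at spec
  have specR : (∏ i, ((Nat.factorial (k i) : ℝ))) * (Nat.multinomial univ k : ℝ)
      = (Nat.factorial e : ℝ) := by exact_mod_cast congrArg (Nat.cast (R := ℝ)) spec
  have hP : (∏ i, ((Nat.factorial (k i) : ℝ))) ≠ 0 := by
    apply Finset.prod_ne_zero_iff.2
    intro i _
    exact Nat.cast_ne_zero.2 (Nat.factorial_ne_zero _)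
  have he : (Nat.factorial e : ℝ) ≠ 0 := Nat.cast_ne_zero.2 (Nat.factorial_ne_zero _)
  have hRHS : ∏ i, (1:ℝ) / (Nat.factorial (k i + 1))
      = (∏ i, (1:ℝ)/((k i : ℝ)+1)) * ∏ i, (1:ℝ) / (Nat.factorial (k i)) := by
    rw [← Finset.prod_mul_distrib]
    apply Finset.prod_congr rfl
    intro i _
    rw [Nat.factorial_succ]
    push_cast
    rw [div_mul_div_comm, one_mul]
  have hinv : ∏ i, (1:ℝ)/(Nat.factorial (k i)) = (∏ i, ((Nat.factorial (k i) : ℝ)))⁻¹ := by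
    rw [← Finset.prod_inv_distrib]
    exact Finset.prod_congr rfl (fun i _ => one_div _)
  have h6 : (Nat.multinomial univ k : ℝ) / (Nat.factorial e)
      = (∏ i, ((Nat.factorial (k i) : ℝ)))⁻¹ := by
    field_simp
    linear_combination specR
  rw [hRHS, hinv, h6]
  ring

lemma main_value (c e : ℕ) :
    ∑ k ∈ piAntidiag (univ : Finset (Fin c)) e,
        ((Nat.multinomial univ k : ℝ) / (Nat.factorial e)) * ∏ i, (1:ℝ)/((k i : ℝ)+1)
      = (Nat.factorial c : ℝ) * stirling (c + e) c / Nat.factorial (c + e) := by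
  rw [Finset.sum_congr rfl (per_k_value c e)]
  have := TR_eq (univ : Finset (Fin c)) e
  rw [card_univ, Fintype.card_fin] at this
  rw [this]
  rfl

theorem limit_alphaq_sum (c d : ℕ) (hc : 1 ≤ c) (hd : 1 ≤ d) :
    Filter.Tendsto
      (fun q : ℕ => (1 / (q : ℝ) ^ (c + d - 1)) *
        ∑ n ∈ Finset.range (c * (q - 1) + 1),
          (alphaq c n q : ℝ) * ((n : ℝ) ^ (d - 1) / (Nat.factorial (d - 1))))
      Filter.atTop
      (nhds ((Nat.factorial c : ℝ) / (Nat.factorial (c + d - 1)) * stirling (c + d - 1) c)) := by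
  obtain ⟨e, rfl⟩ : ∃ e, d = e + 1 := ⟨d - 1, by omega⟩
  have hidx : c + (e + 1) - 1 = c + e := by omega
  have hidx2 : e + 1 - 1 = e := by omega
  simp only [hidx, hidx2]
  -- the limit value
  have hval : (Nat.factorial c : ℝ) / (Nat.factorial (c + e)) * stirling (c + e) c
      = ∑ k ∈ piAntidiag (univ : Finset (Fin c)) e,
          ((Nat.multinomial univ k : ℝ) / (Nat.factorial e)) * ∏ i, (1:ℝ)/((k i : ℝ)+1) := by
    rw [main_value c e]; ring
  rw [hval]
  -- limit of the model function
  have hlim : Tendsto (fun q : ℕ => ∑ k ∈ piAntidiag (univ : Finset (Fin c)) e,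
      ((Nat.multinomial univ k : ℝ) / (Nat.factorial e)) *
        ∏ i, ((∑ j ∈ range q, (j:ℝ)^(k i)) / (q:ℝ)^(k i + 1))) atTop
      (nhds (∑ k ∈ piAntidiag (univ : Finset (Fin c)) e,
        ((Nat.multinomial univ k : ℝ) / (Nat.factorial e)) * ∏ i, (1:ℝ)/((k i : ℝ)+1))) := by
    apply tendsto_finset_sum
    intro k _
    apply Tendsto.const_mul
    apply tendsto_finset_prod
    intro i _
    exact tendsto_riemann (k i)
  apply Tendsto.congr' _ hlim
  filter_upwards [eventually_ge_atTop 1] with q hq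
  have hq0 : (0:ℝ) < (q:ℝ) := by exact_mod_cast hq
  -- transform the model into the original function
  rw [bridge c q hc (fun n => (n:ℝ)^e / Nat.factorial e)]
  have hexp : ∀ p : Fin c → ℕ, p ∈ Fintype.piFinset (fun _ : Fin c => range q) →
      ((∑ i, p i : ℕ):ℝ)^e / Nat.factorial e
      = ∑ k ∈ piAntidiag (univ : Finset (Fin c)) e,
          ((Nat.multinomial univ k : ℝ) * ∏ i, (p i : ℝ)^(k i)) / Nat.factorial e := by
    intro p _
    rw [Nat.cast_sum, Finset.sum_pow_eq_sum_piAntidiag, Finset.sum_div]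
  rw [Finset.sum_congr rfl hexp, Finset.sum_comm, Finset.mul_sum]
  apply Finset.sum_congr rfl
  intro k hk
  have hsum : ∑ i, k i = e := (mem_piAntidiag.1 hk).1
  have hpowq : ∏ i : Fin c, (q:ℝ)^(k i + 1) = (q:ℝ)^(c+e) := by
    rw [Finset.prod_pow_eq_pow_sum]
    congr 1
    rw [Finset.sum_add_distrib, hsum, Finset.sum_const, card_univ, Fintype.card_fin,
      smul_eq_mul, mul_one]
    omega
  have hswap : ∑ p ∈ Fintype.piFinset (fun _ : Fin c => range q), ∏ i, (p i : ℝ)^(k i)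
      = ∏ i : Fin c, ∑ j ∈ range q, (j:ℝ)^(k i) :=
    (Finset.prod_univ_sum (fun _ : Fin c => range q) (fun i j => (j:ℝ)^(k i))).symm
  have hprod : ∏ i : Fin c, ((∑ j ∈ range q, (j:ℝ)^(k i)) / (q:ℝ)^(k i + 1))
      = (∏ i : Fin c, ∑ j ∈ range q, (j:ℝ)^(k i)) / (q:ℝ)^(c+e) := by
    rw [Finset.prod_div_distrib, hpowq]
  rw [hprod, ← hswap, Finset.sum_div, Finset.mul_sum, Finset.mul_sum]
  apply Finset.sum_congr rfl
  intro p _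
  ring
end

section
/- For integers c,d ≥ 1 and any real a ≥ c + d: (1/(c²(d+1)!))·\sum_{l=0}^{c-1} \binom{l+d-1}{d-1}·\sum_{i=0}^{d} (-1)^i \binom{d}{i} (ad+l+i)(a−l−i)^d = (1/(2c²))·((d+2c)·\binom{c+d-1}{d} − 2·\binom{c+d}{d+1}). -/
open Finset

lemma alt_choose_zero (d : ℕ) (hd : 1 ≤ d) :
    ∑ i ∈ range (d + 1), (-1 : ℝ) ^ i * (Nat.choose d i : ℝ) = 0 := by
  have h := Int.alternating_sum_range_choose (n := d)
  rw [if_neg (by omega)] at h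
  have : ((∑ i ∈ range (d + 1), (-1 : ℤ) ^ i * (Nat.choose d i : ℤ) : ℤ) : ℝ) = 0 := by
    rw [h]; norm_num
  push_cast at this
  exact this

lemma shift_sum (m : ℕ) (f : ℕ → ℝ) :
    ∑ i ∈ range (m + 2), (-1 : ℝ) ^ i * (Nat.choose (m + 1) i : ℝ) * i * f i
      = -((m : ℝ) + 1) * ∑ j ∈ range (m + 1), (-1 : ℝ) ^ j * (Nat.choose m j : ℝ) * f (j + 1) := by
  rw [Finset.sum_range_succ' _ (m + 1)]
  simp only [Nat.cast_zero, mul_zero, zero_mul, add_zero]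
  rw [Finset.mul_sum]
  apply Finset.sum_congr rfl
  intro j hj
  have hch : ((m : ℝ) + 1) * (Nat.choose m j : ℝ) = (Nat.choose (m + 1) (j + 1) : ℝ) * ((j : ℝ) + 1) := by
    exact_mod_cast congrArg (Nat.cast : ℕ → ℝ) (Nat.add_one_mul_choose_eq m j)
  rw [pow_succ]
  push_cast
  linear_combination ((-1:ℝ)^j * f (j + 1)) * hch

lemma Zlem : ∀ k : ℕ, ∀ d : ℕ, k < d → ∀ q : ℝ,
    ∑ i ∈ range (d + 1), (-1 : ℝ) ^ i * (Nat.choose d i : ℝ) * (q - i) ^ k = 0 := by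
  intro k
  induction k with
  | zero =>
      intro d hd q
      simpa using alt_choose_zero d hd
  | succ k ih =>
      intro d hd q
      obtain ⟨m, rfl⟩ : ∃ m, d = m + 1 := ⟨d - 1, by omega⟩
      have hsplit : ∀ i : ℕ, (q - (i : ℝ)) ^ (k + 1)
          = q * (q - i) ^ k - (i : ℝ) * (q - i) ^ k := by
        intro i; rw [pow_succ]; ring
      calc ∑ i ∈ range (m + 1 + 1), (-1 : ℝ) ^ i * (Nat.choose (m + 1) i : ℝ) * (q - i) ^ (k + 1)
          = q * (∑ i ∈ range (m + 1 + 1), (-1 : ℝ) ^ i * (Nat.choose (m + 1) i : ℝ) * (q - i) ^ k)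
            - ∑ i ∈ range (m + 1 + 1), (-1 : ℝ) ^ i * (Nat.choose (m + 1) i : ℝ) * i * ((q - i) ^ k) := by
            rw [Finset.mul_sum, ← Finset.sum_sub_distrib]
            apply Finset.sum_congr rfl
            intro i _
            rw [hsplit i]; ring
        _ = 0 := by
            rw [ih (m + 1) (by omega) q, shift_sum m (fun i => (q - i) ^ k)]
            have h2 : ∑ j ∈ range (m + 1), (-1 : ℝ) ^ j * (Nat.choose m j : ℝ) * (q - (j + 1 : ℕ)) ^ k = 0 := by
              have := ih m (by omega) (q - 1)
              rw [← this]
              apply Finset.sum_congr rfl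
              intro j _
              push_cast
              ring_nf
            rw [h2]
            ring

lemma Glem : ∀ d : ℕ, ∀ q : ℝ,
    ∑ i ∈ range (d + 1), (-1 : ℝ) ^ i * (Nat.choose d i : ℝ) * (q - i) ^ d
      = (Nat.factorial d : ℝ) := by
  intro d
  induction d with
  | zero => intro q; simp
  | succ m ih =>
      intro q
      calc ∑ i ∈ range (m + 1 + 1), (-1 : ℝ) ^ i * (Nat.choose (m + 1) i : ℝ) * (q - i) ^ (m + 1)
          = q * (∑ i ∈ range (m + 1 + 1), (-1 : ℝ) ^ i * (Nat.choose (m + 1) i : ℝ) * (q - i) ^ m)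
            - ∑ i ∈ range (m + 1 + 1), (-1 : ℝ) ^ i * (Nat.choose (m + 1) i : ℝ) * i * ((q - i) ^ m) := by
            rw [Finset.mul_sum, ← Finset.sum_sub_distrib]
            apply Finset.sum_congr rfl
            intro i _
            rw [pow_succ]; ring
        _ = (Nat.factorial (m + 1) : ℝ) := by
            rw [Zlem m (m + 1) (by omega) q, shift_sum m (fun i => (q - i) ^ m)]
            have h2 : ∑ j ∈ range (m + 1), (-1 : ℝ) ^ j * (Nat.choose m j : ℝ) * (q - (j + 1 : ℕ)) ^ m
                = (Nat.factorial m : ℝ) := by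
              rw [← ih (q - 1)]
              apply Finset.sum_congr rfl
              intro j _
              push_cast
              ring_nf
            rw [h2, Nat.factorial_succ]
            push_cast
            ring

lemma Hlem : ∀ d : ℕ, ∀ q : ℝ,
    ∑ i ∈ range (d + 1), (-1 : ℝ) ^ i * (Nat.choose d i : ℝ) * (q - i) ^ (d + 1)
      = (Nat.factorial d : ℝ) * ((d : ℝ) + 1) * (2 * q - d) / 2 := by
  intro d
  induction d with
  | zero => intro q; simp
  | succ m ih =>
      intro q
      calc ∑ i ∈ range (m + 1 + 1), (-1 : ℝ) ^ i * (Nat.choose (m + 1) i : ℝ) * (q - i) ^ (m + 1 + 1)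
          = q * (∑ i ∈ range (m + 1 + 1), (-1 : ℝ) ^ i * (Nat.choose (m + 1) i : ℝ) * (q - i) ^ (m + 1))
            - ∑ i ∈ range (m + 1 + 1), (-1 : ℝ) ^ i * (Nat.choose (m + 1) i : ℝ) * i * ((q - i) ^ (m + 1)) := by
            rw [Finset.mul_sum, ← Finset.sum_sub_distrib]
            apply Finset.sum_congr rfl
            intro i _
            rw [pow_succ]; ring
        _ = (Nat.factorial (m + 1) : ℝ) * ((m + 1 : ℕ) + 1 : ℝ) * (2 * q - (m + 1 : ℕ)) / 2 := by
            rw [Glem (m + 1) q, shift_sum m (fun i => (q - i) ^ (m + 1))]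
            have h2 : ∑ j ∈ range (m + 1), (-1 : ℝ) ^ j * (Nat.choose m j : ℝ) * (q - (j + 1 : ℕ)) ^ (m + 1)
                = (Nat.factorial m : ℝ) * ((m : ℝ) + 1) * (2 * (q - 1) - m) / 2 := by
              rw [← ih (q - 1)]
              apply Finset.sum_congr rfl
              intro j _
              push_cast
              ring_nf
            rw [h2, Nat.factorial_succ]
            push_cast
            ring

lemma Slem (d : ℕ) (p q : ℝ) :
    ∑ i ∈ range (d + 1), (-1 : ℝ) ^ i * (Nat.choose d i : ℝ) * (p + i) * (q - i) ^ d
      = (Nat.factorial d : ℝ) * (2 * p - 2 * d * q + d * (d + 1)) / 2 := by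
  match d with
  | 0 => simp
  | m + 1 =>
      calc ∑ i ∈ range (m + 1 + 1), (-1 : ℝ) ^ i * (Nat.choose (m + 1) i : ℝ) * (p + i) * (q - i) ^ (m + 1)
          = p * (∑ i ∈ range (m + 1 + 1), (-1 : ℝ) ^ i * (Nat.choose (m + 1) i : ℝ) * (q - i) ^ (m + 1))
            + ∑ i ∈ range (m + 1 + 1), (-1 : ℝ) ^ i * (Nat.choose (m + 1) i : ℝ) * i * ((q - i) ^ (m + 1)) := by
            rw [Finset.mul_sum, ← Finset.sum_add_distrib]
            apply Finset.sum_congr rfl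
            intro i _
            ring
        _ = (Nat.factorial (m + 1) : ℝ) * (2 * p - 2 * (m + 1 : ℕ) * q + (m + 1 : ℕ) * ((m + 1 : ℕ) + 1)) / 2 := by
            rw [Glem (m + 1) q, shift_sum m (fun i => (q - i) ^ (m + 1))]
            have h2 : ∑ j ∈ range (m + 1), (-1 : ℝ) ^ j * (Nat.choose m j : ℝ) * (q - (j + 1 : ℕ)) ^ (m + 1)
                = (Nat.factorial m : ℝ) * ((m : ℝ) + 1) * (2 * (q - 1) - m) / 2 := by
              rw [← Hlem m (q - 1)]
              apply Finset.sum_congr rfl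
              intro j _
              push_cast
              ring_nf
            rw [h2, Nat.factorial_succ]
            push_cast
            ring

lemma sumC (e : ℕ) : ∀ c : ℕ,
    ∑ l ∈ range c, (Nat.choose (l + e) e : ℝ) * (2 * l + (e + 1))
      = (((e : ℝ) + 1) + 2 * c) * (Nat.choose (c + e) (e + 1) : ℝ)
        - 2 * (Nat.choose (c + e + 1) (e + 2) : ℝ) := by
  intro c
  induction c with
  | zero =>
      simp [Nat.choose_eq_zero_of_lt (by omega : e < e + 1),
        Nat.choose_eq_zero_of_lt (by omega : e + 1 < e + 2)]
  | succ c ih =>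
      rw [Finset.sum_range_succ, ih]
      have hx : (Nat.choose (c + 1 + e) (e + 1) : ℝ)
          = (Nat.choose (c + e) e : ℝ) + (Nat.choose (c + e) (e + 1) : ℝ) := by
        have : c + 1 + e = (c + e) + 1 := by omega
        rw [this, Nat.choose_succ_succ]
        push_cast; ring
      have hy : (Nat.choose (c + 1 + e + 1) (e + 2) : ℝ)
          = (Nat.choose (c + e + 1) (e + 1) : ℝ) + (Nat.choose (c + e + 1) (e + 2) : ℝ) := by
        have : c + 1 + e + 1 = (c + e + 1) + 1 := by omega
        rw [this, Nat.choose_succ_succ]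
        push_cast; ring
      have hz : (Nat.choose (c + e + 1) (e + 1) : ℝ)
          = (Nat.choose (c + e) e : ℝ) + (Nat.choose (c + e) (e + 1) : ℝ) := by
        rw [Nat.choose_succ_succ]
        push_cast; ring
      rw [hx, hy, hz]
      push_cast
      ring

theorem I1_evaluation (c d : ℕ) (hc : 1 ≤ c) (hd : 1 ≤ d) (a : ℝ) (ha : (c : ℝ) + d ≤ a) :
    (1 / ((c : ℝ) ^ 2 * Nat.factorial (d + 1))) *
        ∑ l ∈ Finset.range c, (Nat.choose (l + d - 1) (d - 1) : ℝ) *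
          ∑ i ∈ Finset.range (d + 1),
            (-1 : ℝ) ^ i * (Nat.choose d i) * (a * d + l + i) * (a - l - i) ^ d =
      (1 / (2 * (c : ℝ) ^ 2)) *
        (((d : ℝ) + 2 * c) * (Nat.choose (c + d - 1) d : ℝ) -
          2 * (Nat.choose (c + d) (d + 1) : ℝ)) := by
  obtain ⟨e, rfl⟩ : ∃ e, d = e + 1 := ⟨d - 1, by omega⟩
  have hsum : ∑ l ∈ Finset.range c, (Nat.choose (l + (e + 1) - 1) ((e + 1) - 1) : ℝ) *
          ∑ i ∈ Finset.range ((e + 1) + 1),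
            (-1 : ℝ) ^ i * (Nat.choose (e + 1) i) * (a * (e + 1 : ℕ) + l + i) * (a - l - i) ^ (e + 1)
      = ((Nat.factorial (e + 1) : ℝ) * ((e : ℝ) + 2) / 2) *
          ∑ l ∈ Finset.range c, (Nat.choose (l + e) e : ℝ) * (2 * l + ((e : ℝ) + 1)) := by
    rw [Finset.mul_sum]
    apply Finset.sum_congr rfl
    intro l _
    rw [show l + (e + 1) - 1 = l + e from rfl, show (e + 1) - 1 = e from rfl]
    rw [Slem (e + 1) (a * ((e + 1 : ℕ) : ℝ) + l) (a - l)]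
    push_cast
    ring
  rw [hsum, sumC e c]
  rw [show c + (e + 1) - 1 = c + e from rfl, show c + (e + 1) = c + e + 1 from rfl,
    show (e + 1) + 1 = e + 2 from rfl]
  have hc0 : (c : ℝ) ≠ 0 := by positivity
  have hf : (Nat.factorial (e + 2) : ℝ) = ((e : ℝ) + 2) * (Nat.factorial (e + 1) : ℝ) := by
    rw [Nat.factorial_succ]; push_cast; ring
  have hfne : (Nat.factorial (e + 1) : ℝ) ≠ 0 := by positivity
  rw [hf]
  push_cast
  field_simp
end
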